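/- Let W_λ be a bilateral weighted shift in ℓ²(ℤ) with all weights λₙ ≠ 0, C-symmetric with respect to a conjugation C satisfying C eₙ ∈ dom(W_λ) for all n ∈ ℤ. Then there exists k ∈ ℤ such that |λₙ| = |λ_{k−n}| for all n ∈ ℤ. -/

import Mathlib

open InnerProductSpace in
/-- A conjugation on a complex inner product space: an antilinear involution
satisfying `⟪Cf, Cg⟫ = ⟪g, f⟫`. -/
structure Conjugation (H : Type*) [NormedAddCommGroup H] [InnerProductSpace ℂ H] where
  toFun : H → H
  map_add' : ∀ x y, toFun (x + y) = toFun x + toFun y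
  map_smul' : ∀ (c : ℂ) (x : H), toFun (c • x) = (starRingEnd ℂ c) • toFun x
  invol : ∀ x, toFun (toFun x) = x
  inner_map : ∀ x y, (inner ℂ (toFun x) (toFun y) : ℂ) = inner ℂ y x

/-- `T` is `C`-symmetric: `T ⊆ C T* C`. -/
noncomputable def CSymmetric {H : Type*} [NormedAddCommGroup H] [InnerProductSpace ℂ H]
    [CompleteSpace H] (C : Conjugation H) (T : H →ₗ.[ℂ] H) : Prop :=
  ∀ x : T.domain, ∃ hx : C.toFun x ∈ T.adjoint.domain,
    C.toFun (T.adjoint ⟨C.toFun x, hx⟩) = T x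

/-- `T` is `C`-selfadjoint: `T = C T* C`. -/
noncomputable def CSelfAdjoint {H : Type*} [NormedAddCommGroup H] [InnerProductSpace ℂ H]
    [CompleteSpace H] (C : Conjugation H) (T : H →ₗ.[ℂ] H) : Prop :=
  CSymmetric C T ∧ ∀ y : H, C.toFun y ∈ T.adjoint.domain → y ∈ T.domain

/-- Composition of partially defined linear maps, with its natural (maximal) domain. -/
noncomputable def LinearPMap.pcomp {R E F G : Type*} [Ring R] [AddCommGroup E] [Module R E]
    [AddCommGroup F] [Module R F] [AddCommGroup G] [Module R G]
    (g : F →ₗ.[R] G) (f : E →ₗ.[R] F) : E →ₗ.[R] G :=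
  g.comp (f.domRestrict ((g.domain.comap f.toFun).map f.domain.subtype))
    (by
      rintro ⟨x, hx1, hx2⟩
      obtain ⟨y, hy, hyx⟩ := hx1
      erw [LinearPMap.domRestrict_apply (y := y) (by exact hyx.symm)]
      exact hy)

/-- Natural powers of a partially defined linear map, `T^(n+1) = T ∘ T^n`, with
`T^0` the identity on the whole space. -/
noncomputable def LinearPMap.ppow {R E : Type*} [Ring R] [AddCommGroup E] [Module R E]
    (T : E →ₗ.[R] E) : ℕ → E →ₗ.[R] E
  | 0 => ⟨⊤, (⊤ : Submodule R E).subtype⟩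
  | n + 1 => T.pcomp (T.ppow n)

/-- `W` is the bilateral weighted shift in `ℓ²(ℤ)` with weights `lam`
(`W eₙ = lam n • e_{n+1}`): it has the maximal domain `{f : Σ |lam n * f n|² < ∞}` and
acts by `(W f)(n) = lam (n-1) * f (n-1)`. -/
def IsBilateralShift (lam : ℤ → ℂ) (W : lp (fun _ : ℤ => ℂ) 2 →ₗ.[ℂ] lp (fun _ : ℤ => ℂ) 2) :
    Prop :=
  (∀ f : lp (fun _ : ℤ => ℂ) 2, f ∈ W.domain ↔ Memℓp (fun n => lam n * f n) 2) ∧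
  (∀ f : W.domain, ∀ n : ℤ,
    (W f : lp (fun _ : ℤ => ℂ) 2) n = lam (n - 1) * (f : lp (fun _ : ℤ => ℂ) 2) (n - 1))

/-- The canonical orthonormal basis of `ℓ²(ℤ)`. -/
noncomputable def eZ (n : ℤ) : lp (fun _ : ℤ => ℂ) 2 := lp.single 2 n 1

/-!
Write `σ m n` for the `m`-th coordinate of `C eₙ`. Applying `C`-symmetry to `eₙ` and to
`C eₙ₊₁` (which lies in the domain) gives the two relations
`λₙ conj σ(m, n+1) = λₘ conj σ(m+1, n)` and `λₘ σ(m, n+1) = λₙ σ(m+1, n)`.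
In absolute values their difference reads `(|λₙ| - |λₘ|) (|σ(m, n+1)| + |σ(m+1, n)|) = 0`,
so `|λₘ| = |λₙ|` as soon as `σ(m+1, n) ≠ 0`. Since the weights do not vanish, the second
relation propagates `σ ≠ 0` along an antidiagonal `m + n = j`, and `C e₀ ≠ 0` provides one
with `σ(j, 0) ≠ 0`; then `|λₙ| = |λ_{j-1-n}|`.
-/

open LinearPMap ComplexConjugate

local notation "ℓ²(ℤ)" => lp (fun _ : ℤ => ℂ) 2

section CrossRelations

variable {r : ℤ → ℝ} {a : ℤ → ℤ → ℝ}

theorem eq_of_cross_relations (ha : ∀ m n, 0 ≤ a m n)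
    (hA : ∀ m n, r n * a m (n + 1) = r m * a (m + 1) n)
    (hB : ∀ m n, r m * a m (n + 1) = r n * a (m + 1) n)
    {m n : ℤ} (hmn : a (m + 1) n ≠ 0) : r m = r n := by
  have hsum : 0 < a m (n + 1) + a (m + 1) n :=
    add_pos_of_nonneg_of_pos (ha _ _) ((ha _ _).lt_of_ne' hmn)
  have h : (r n - r m) * (a m (n + 1) + a (m + 1) n) = 0 := by
    linear_combination hA m n - hB m n
  exact (sub_eq_zero.mp ((mul_eq_zero.mp h).resolve_right hsum.ne')).symm

theorem ne_zero_antidiagonal (hr : ∀ n, r n ≠ 0)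
    (hB : ∀ m n, r m * a m (n + 1) = r n * a (m + 1) n) {j : ℤ} (hj : a j 0 ≠ 0) (p : ℤ) :
    a p (j - p) ≠ 0 := by
  have step : ∀ p, a p (j - p) ≠ 0 ↔ a (p + 1) (j - (p + 1)) ≠ 0 := fun p => by
    have h := hB p (j - (p + 1))
    rw [show j - (p + 1) + 1 = j - p by ring] at h
    rw [← (mul_ne_zero_iff_left (hr p)), h, mul_ne_zero_iff_left (hr _)]
  induction p using Int.inductionOn' (b := j) with
  | zero => simpa using hj
  | succ k _ ih => exact (step k).mp ih
  | pred k _ ih => exact (step (k - 1)).mpr (by simpa using ih)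

theorem eq_reflect_of_cross_relations (ha : ∀ m n, 0 ≤ a m n) (hr : ∀ n, r n ≠ 0)
    (hA : ∀ m n, r n * a m (n + 1) = r m * a (m + 1) n)
    (hB : ∀ m n, r m * a m (n + 1) = r n * a (m + 1) n) {j : ℤ} (hj : a j 0 ≠ 0) (n : ℤ) :
    r n = r (j - 1 - n) := by
  have hdiag := ne_zero_antidiagonal hr hB hj (j - 1 - n + 1)
  rw [show j - (j - 1 - n + 1) = n by ring] at hdiag
  exact (eq_of_cross_relations ha hA hB hdiag).symm

end CrossRelations

namespace Conjugation

variable {H : Type*} [NormedAddCommGroup H] [InnerProductSpace ℂ H] (C : Conjugation H)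

theorem map_zero : C.toFun 0 = 0 := by
  simpa using C.map_smul' 0 0

theorem map_ne_zero {x : H} (hx : x ≠ 0) : C.toFun x ≠ 0 := fun h =>
  hx (by rw [← C.invol x, h, C.map_zero])

end Conjugation

namespace CSymmetric

variable {H : Type*} [NormedAddCommGroup H] [InnerProductSpace ℂ H] [CompleteSpace H]
  {C : Conjugation H} {T : H →ₗ.[ℂ] H}

theorem adjoint_apply_conj (hT : CSymmetric C T) (x : T.domain)
    (hx : C.toFun x ∈ T†.domain) : T† ⟨C.toFun x, hx⟩ = C.toFun (T x) := by
  obtain ⟨_, h⟩ := hT x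
  rw [← h, C.invol]

theorem inner_conj_apply (hT : CSymmetric C T) (hd : Dense (T.domain : Set H))
    (x y : T.domain) : inner ℂ (C.toFun (T x)) (y : H) = inner ℂ (C.toFun x) (T y) := by
  obtain ⟨hx, -⟩ := hT x
  rw [← hT.adjoint_apply_conj x hx]
  exact adjoint_isFormalAdjoint hd ⟨C.toFun x, hx⟩ y

theorem apply_conj (hT : CSymmetric C T) {y : H} (hy : C.toFun y ∈ T.domain)
    (hy' : y ∈ T†.domain) : T ⟨C.toFun y, hy⟩ = C.toFun (T† ⟨y, hy'⟩) := by
  obtain ⟨h, e⟩ := hT ⟨C.toFun y, hy⟩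
  have hCC : (⟨C.toFun (C.toFun y), h⟩ : T†.domain) = ⟨y, hy'⟩ := Subtype.ext (C.invol y)
  rw [← e, hCC]

end CSymmetric

theorem eZ_apply (n m : ℤ) : eZ n m = if m = n then 1 else 0 := by
  rw [eZ, lp.single_apply, Pi.single_apply]

theorem eZ_ne_zero (n : ℤ) : eZ n ≠ 0 := fun h => by
  simpa [eZ_apply] using congrArg (fun f : ℓ²(ℤ) => f n) h

theorem inner_eZ_right (f : ℓ²(ℤ)) (n : ℤ) : inner ℂ f (eZ n) = conj (f n) := by
  simp [eZ, lp.inner_single_right, RCLike.inner_apply]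

theorem dense_of_forall_eZ_mem {p : Submodule ℂ ℓ²(ℤ)} (h : ∀ n, eZ n ∈ p) :
    Dense (p : Set ℓ²(ℤ)) := fun f => by
  refine mem_closure_of_tendsto (lp.hasSum_single ENNReal.ofNat_ne_top f)
    (Filter.Eventually.of_forall fun s => p.sum_mem fun i _ => ?_)
  rw [show lp.single 2 i (f i) = f i • eZ i by rw [eZ, ← lp.single_smul, smul_eq_mul, mul_one]]
  exact p.smul_mem _ (h i)

namespace IsBilateralShift

variable {lam : ℤ → ℂ} {W : ℓ²(ℤ) →ₗ.[ℂ] ℓ²(ℤ)} (hW : IsBilateralShift lam W)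
include hW

theorem eZ_mem_domain (n : ℤ) : eZ n ∈ W.domain := by
  rw [hW.1]
  convert (lp.memℓp (eZ n)).const_smul (lam n) using 1
  funext m
  by_cases h : m = n <;> simp [eZ_apply, h]

theorem apply_eZ (n : ℤ) :
    (W ⟨eZ n, hW.eZ_mem_domain n⟩ : ℓ²(ℤ)) = lam n • eZ (n + 1) := by
  ext m
  rw [hW.2, lp.coeFn_smul, Pi.smul_apply, smul_eq_mul, eZ_apply, eZ_apply]
  by_cases h : m = n + 1
  · simp [h]
  · simp [h, show m - 1 ≠ n by omega]

theorem dense_domain : Dense (W.domain : Set ℓ²(ℤ)) :=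
  dense_of_forall_eZ_mem hW.eZ_mem_domain

theorem inner_eZ_apply (n : ℤ) (x : W.domain) :
    inner ℂ (conj (lam n) • eZ n) (x : ℓ²(ℤ)) = inner ℂ (eZ (n + 1)) (W x) := by
  rw [inner_smul_left, Complex.conj_conj, eZ, eZ, lp.inner_single_left, lp.inner_single_left, hW.2,
    add_sub_cancel_right]
  simp [RCLike.inner_apply]

theorem eZ_mem_adjoint_domain (n : ℤ) : eZ (n + 1) ∈ W†.domain :=
  mem_adjoint_domain_of_exists _ ⟨_, hW.inner_eZ_apply n⟩

theorem adjoint_apply_eZ (n : ℤ) :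
    (W† ⟨eZ (n + 1), hW.eZ_mem_adjoint_domain n⟩ : ℓ²(ℤ)) = conj (lam n) • eZ n :=
  adjoint_apply_eq hW.dense_domain _ (hW.inner_eZ_apply n)

variable {C : Conjugation ℓ²(ℤ)} (hsym : CSymmetric C W)
include hsym

theorem weight_mul_conj_coord (m n : ℤ) :
    lam n * conj (C.toFun (eZ (n + 1)) m) = lam m * conj (C.toFun (eZ n) (m + 1)) := by
  have h := hsym.inner_conj_apply hW.dense_domain ⟨eZ n, hW.eZ_mem_domain n⟩
    ⟨eZ m, hW.eZ_mem_domain m⟩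
  rwa [hW.apply_eZ, hW.apply_eZ, C.map_smul', inner_smul_left, inner_smul_right,
    Complex.conj_conj, inner_eZ_right, inner_eZ_right] at h

theorem weight_mul_coord (hdom : ∀ n : ℤ, C.toFun (eZ n) ∈ W.domain) (m n : ℤ) :
    lam m * C.toFun (eZ (n + 1)) m = lam n * C.toFun (eZ n) (m + 1) := by
  have h := hsym.apply_conj (hdom (n + 1)) (hW.eZ_mem_adjoint_domain n)
  rw [hW.adjoint_apply_eZ, C.map_smul', Complex.conj_conj] at h
  have h' := congrArg (fun f : ℓ²(ℤ) => f (m + 1)) h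
  simpa only [hW.2, add_sub_cancel_right, lp.coeFn_smul, Pi.smul_apply, smul_eq_mul] using h'

end IsBilateralShift

/-- if a bilateral weighted shift `W_λ` in `ℓ²(ℤ)` with all weights
nonzero is `C`-symmetric with `C eₙ ∈ dom W_λ` for all `n ∈ ℤ`, then there is `k ∈ ℤ`
with `|λₙ| = |λ_{k-n}|` for all `n ∈ ℤ`. -/
theorem stmt_19 (lam : ℤ → ℂ) (hlam : ∀ n, lam n ≠ 0)
    (W : lp (fun _ : ℤ => ℂ) 2 →ₗ.[ℂ] lp (fun _ : ℤ => ℂ) 2)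
    (hW : IsBilateralShift lam W)
    (C : Conjugation (lp (fun _ : ℤ => ℂ) 2)) (hsym : CSymmetric C W)
    (hdom : ∀ n : ℤ, C.toFun (eZ n) ∈ W.domain) :
    ∃ k : ℤ, ∀ n : ℤ, ‖lam n‖ = ‖lam (k - n)‖ := by
  obtain ⟨j, hj⟩ : ∃ j, C.toFun (eZ 0) j ≠ 0 := by
    by_contra! h
    exact C.map_ne_zero (eZ_ne_zero 0) (lp.ext (funext h))
  refine ⟨j - 1, eq_reflect_of_cross_relations (r := fun n => ‖lam n‖)
    (a := fun m n => ‖C.toFun (eZ n) m‖) (fun _ _ => norm_nonneg _)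
    (fun n => norm_ne_zero_iff.mpr (hlam n)) (fun m n => ?_) (fun m n => ?_)
    (norm_ne_zero_iff.mpr hj)⟩
  · simpa only [norm_mul, Complex.norm_conj] using
      congrArg norm (hW.weight_mul_conj_coord hsym m n)
  · simpa only [norm_mul] using congrArg norm (hW.weight_mul_coord hsym hdom m n)
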